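/- For every integer k ≥ 1, the minimum of the dominator chromatic number χ_d(D) over all orientations D of the path P_{4k+3} equals k+3. -/

import Mathlib

/-- A vertex `v` dominates the color class of color `a` under coloring `c`:
the class is nonempty and every vertex of that color is an out-neighbor of `v`. -/
def Dominates {V α : Type*} (A : V → V → Prop) (c : V → α) (v : V) (a : α) : Prop :=
  (∃ w, c w = a) ∧ ∀ w, c w = a → A v w

/-- A dominator coloring of the digraph with arc relation `A`: a proper coloring
such that every vertex with positive out-degree dominates some color class. -/
def IsDominatorColoring {V α : Type*} (A : V → V → Prop) (c : V → α) : Prop :=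
  (∀ u v, A u v → c u ≠ c v) ∧ ∀ v, (∃ w, A v w) → ∃ a, Dominates A c v a

/-- The dominator chromatic number: the least `k` admitting a dominator coloring
with colors in `Fin k`. -/
noncomputable def domChrom {V : Type*} (A : V → V → Prop) : ℕ :=
  sInf {k | ∃ c : V → Fin k, IsDominatorColoring A c}

/-- The arc relation of the orientation of the path `P_n` (vertices `0,…,n-1`)
determined by `o`: the edge between `i` and `i+1` is directed `i → i+1`
when `o i = true` and `i+1 → i` when `o i = false`. -/
def pathArc (n : ℕ) (o : ℕ → Bool) (u v : Fin n) : Prop :=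
  ((u : ℕ) + 1 = (v : ℕ) ∧ o u = true) ∨ ((v : ℕ) + 1 = (u : ℕ) ∧ o v = false)

/-- The minimum of the dominator chromatic number over all orientations of `P_n`. -/
noncomputable def minDomChromPath (n : ℕ) : ℕ :=
  sInf {m | ∃ o : ℕ → Bool, m = domChrom (pathArc n o)}

/-!
Lower bound. In an orientation of a path a color class dominated by `v` consists of
out-neighbors of `v`, so it has at most two vertices; it is dominated only by in-neighbors
of any of its vertices, so by at most two vertices, and by at most one if the class has two
vertices. Hence `|class| + |dominators| ≤ 3` for every dominated color. The sinks, and every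
color class, are independent, so have at most `2k + 2` of the `n = 4k + 3` vertices. The
`≥ 2k + 1` non-sinks each dominate a color, so at least `k + 1` colors are dominated, and with
`k + 2` colors at most one color `b` is dominated by nobody. Counting vertices and non-sinks
together gives `2n ≤ 3(k + 1) + |class of b| + |sinks|`, which forces both the class of `b` and
the set of sinks to be independent sets of maximum size, i.e. the even vertices. But then
vertex `1` is a non-sink all of whose out-neighbors have the undominated color `b`.

Upper bound. Orient every edge from its even to its odd end, give each vertex `4i + 1` its own
color, all other odd vertices one color, and all even vertices another: an even vertex `v`
dominates the singleton class of whichever of `v ± 1` is `1 mod 4`.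
-/

open Finset

section Digraph

variable {V α : Type*} {A : V → V → Prop} {c : V → α}

theorem IsDominatorColoring.of_forall_exists_singleton_class
    (hproper : ∀ u v, A u v → c u ≠ c v)
    (hsingleton : ∀ v, (∃ w, A v w) → ∃ w, A v w ∧ ∀ x, c x = c w → x = w) :
    IsDominatorColoring A c := by
  refine ⟨hproper, fun v hv => ?_⟩
  obtain ⟨w, hvw, hw⟩ := hsingleton v hv
  exact ⟨c w, ⟨w, rfl⟩, fun x hx => hw x hx ▸ hvw⟩

theorem IsDominatorColoring.of_injective (hirrefl : ∀ v, ¬ A v v) (hc : Function.Injective c) :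
    IsDominatorColoring A c :=
  .of_forall_exists_singleton_class (fun u _ huv h => hirrefl u (hc h ▸ huv))
    fun _ ⟨w, hvw⟩ => ⟨w, hvw, fun _ hx => hc hx⟩

theorem IsDominatorColoring.exists_adj_dominates (hc : IsDominatorColoring A c) {v : V}
    (hv : ∃ w, A v w) : ∃ w, A v w ∧ Dominates A c v (c w) := by
  obtain ⟨_, ⟨w, rfl⟩, hw⟩ := hc.2 v hv
  exact ⟨w, hw w rfl, ⟨w, rfl⟩, hw⟩

theorem domChrom_le {m : ℕ} {c : V → Fin m} (hc : IsDominatorColoring A c) : domChrom A ≤ m :=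
  Nat.sInf_le ⟨c, hc⟩

theorem le_domChrom {k m : ℕ} {c : V → Fin m} (hc : IsDominatorColoring A c)
    (h : ∀ m (c : V → Fin m), IsDominatorColoring A c → k ≤ m) : k ≤ domChrom A :=
  le_csInf ⟨m, c, hc⟩ fun _ ⟨c, hc⟩ => h _ c hc

variable [Fintype V]

open Classical in
noncomputable def colorClass (c : V → α) (a : α) : Finset V := {v | c v = a}

open Classical in
noncomputable def dominators (A : V → V → Prop) (c : V → α) (a : α) : Finset V :=
  {v | Dominates A c v a}

open Classical in
noncomputable def sinks (A : V → V → Prop) : Finset V := {v | ∀ w, ¬ A v w}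

@[simp]
theorem mem_colorClass {a : α} {v : V} : v ∈ colorClass c a ↔ c v = a := by
  simp [colorClass]

@[simp]
theorem mem_dominators {a : α} {v : V} : v ∈ dominators A c a ↔ Dominates A c v a := by
  simp [dominators]

@[simp]
theorem mem_sinks {v : V} : v ∈ sinks A ↔ ∀ w, ¬ A v w := by
  simp [sinks]

theorem card_eq_sum_card_colorClass [Fintype α] [DecidableEq α] :
    Fintype.card V = ∑ a, #(colorClass c a) := by
  rw [← card_univ, card_eq_sum_card_fiberwise fun v _ => mem_coe.2 (mem_univ (c v))]
  congr! 2 with a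
  ext v
  simp

theorem card_compl_sinks_le_sum_card_dominators [Fintype α] [DecidableEq V]
    (hc : IsDominatorColoring A c) : #(sinks A)ᶜ ≤ ∑ a, #(dominators A c a) := by
  refine le_trans (card_le_card fun v hv => ?_) card_biUnion_le
  obtain ⟨a, ha⟩ := hc.2 v (by simpa using hv)
  exact mem_biUnion.2 ⟨a, mem_univ _, mem_dominators.2 ha⟩

end Digraph

section Path

variable {n : ℕ} {o : ℕ → Bool}

theorem pathArc_adj {u v : Fin n} (h : pathArc n o u v) : (u : ℕ) + 1 = v ∨ (v : ℕ) + 1 = u := by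
  rcases h with ⟨h, -⟩ | ⟨h, -⟩ <;> omega

theorem pathArc_or_pathArc {u v : Fin n} (h : (u : ℕ) + 1 = v) :
    pathArc n o u v ∨ pathArc n o v u := by
  cases hu : o u
  · exact .inr (.inr ⟨h, hu⟩)
  · exact .inl (.inl ⟨h, hu⟩)

theorem pathArc_irrefl (v : Fin n) : ¬ pathArc n o v v := fun h => by
  have := pathArc_adj h
  omega

theorem card_le_two_of_forall_adj {v : Fin n} {s : Finset (Fin n)}
    (hs : ∀ w ∈ s, (v : ℕ) + 1 = w ∨ (w : ℕ) + 1 = v) : #s ≤ 2 :=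
  calc #s ≤ #({(v : ℕ) - 1, (v : ℕ) + 1} : Finset ℕ) :=
        card_le_card_of_injOn (fun w : Fin n => (w : ℕ))
          (fun w hw => by have := hs w hw; simp only [coe_insert, coe_singleton]; grind)
          Fin.val_injective.injOn
    _ ≤ 2 := card_le_two

theorem two_mul_card_le_of_forall_succ_ne {s : Finset (Fin n)}
    (hs : ∀ u ∈ s, ∀ v ∈ s, (u : ℕ) + 1 ≠ v) : 2 * #s ≤ n + 1 := by
  have : #s ≤ #(range ((n + 1) / 2)) :=
    card_le_card_of_injOn (fun v : Fin n => (v : ℕ) / 2)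
      (fun v _ => by have := v.isLt; simp only [coe_range, Set.mem_Iio]; omega)
      (fun u hu v hv huv => by
        have := hs u hu v hv; have := hs v hv u hu
        exact Fin.val_injective (by simp only at huv; omega))
  rw [card_range] at this
  omega

theorem even_of_mem_of_forall_succ_ne (hn : Odd n) {s : Finset (Fin n)}
    (hs : ∀ u ∈ s, ∀ v ∈ s, (u : ℕ) + 1 ≠ v) (hcard : n < 2 * #s) {w : Fin n} (hw : w ∈ s) :
    Even (w : ℕ) := by
  obtain ⟨j, rfl⟩ := hn
  by_contra hodd
  rw [Nat.not_even_iff_odd, Nat.odd_iff] at hodd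
  -- halving the vertices, shifted by one beyond `w`, misses the value `w / 2`
  have : #s ≤ #((range (j + 1)).erase ((w : ℕ) / 2)) :=
    card_le_card_of_injOn (fun v : Fin (2 * j + 1) => if v < w then (v : ℕ) / 2 else (v + 1) / 2)
      (fun v hv => by
        have := v.isLt; have := hs v hv w hw
        simp only [coe_erase, coe_range, Set.mem_sdiff, Set.mem_Iio, Set.mem_singleton_iff]
        split_ifs <;> omega)
      (fun u hu v hv huv => by
        have := hs u hu v hv; have := hs v hv u hu
        exact Fin.val_injective (by simp only at huv; split_ifs at huv <;> omega))
  rw [card_erase_of_mem (mem_range.2 (by omega)), card_range] at this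
  omega

theorem mem_iff_even_of_forall_succ_ne (hn : Odd n) {s : Finset (Fin n)}
    (hs : ∀ u ∈ s, ∀ v ∈ s, (u : ℕ) + 1 ≠ v) (hcard : n < 2 * #s) (v : Fin n) :
    v ∈ s ↔ Even (v : ℕ) := by
  let evens : Finset (Fin n) := {v | Even (v : ℕ)}
  have hevens : 2 * #evens ≤ n + 1 :=
    two_mul_card_le_of_forall_succ_ne fun u hu v hv huv => by
      simp only [evens, mem_filter, mem_univ, true_and, Nat.even_iff] at hu hv
      omega
  have hsub : s ⊆ evens := fun v hv => by
    simpa [evens] using even_of_mem_of_forall_succ_ne hn hs hcard hv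
  rw [eq_of_subset_of_card_le hsub (by omega)]
  simp [evens]

section Coloring

variable {m : ℕ} {c : Fin n → Fin m}

theorem sinks_pathArc_succ_ne : ∀ u ∈ sinks (pathArc n o), ∀ v ∈ sinks (pathArc n o),
    (u : ℕ) + 1 ≠ v := by
  intro u hu v hv huv
  rw [mem_sinks] at hu hv
  rcases pathArc_or_pathArc (o := o) huv with h | h
  exacts [hu v h, hv u h]

theorem IsDominatorColoring.colorClass_pathArc_succ_ne (hc : IsDominatorColoring (pathArc n o) c)
    (a : Fin m) : ∀ u ∈ colorClass c a, ∀ v ∈ colorClass c a, (u : ℕ) + 1 ≠ v := by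
  intro u hu v hv huv
  rw [mem_colorClass] at hu hv
  rcases pathArc_or_pathArc (o := o) huv with h | h
  exacts [hc.1 u v h (hu.trans hv.symm), hc.1 v u h (hv.trans hu.symm)]

theorem card_colorClass_le_two {a : Fin m} {v : Fin n} (hv : Dominates (pathArc n o) c v a) :
    #(colorClass c a) ≤ 2 :=
  card_le_two_of_forall_adj fun w hw => pathArc_adj (hv.2 w (mem_colorClass.1 hw))

theorem card_dominators_le_two (a : Fin m) : #(dominators (pathArc n o) c a) ≤ 2 := by
  rcases (dominators (pathArc n o) c a).eq_empty_or_nonempty with hempty | ⟨v, hv⟩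
  · simp [hempty]
  obtain ⟨w, hw⟩ := (mem_dominators.1 hv).1
  refine card_le_two_of_forall_adj (v := w) fun u hu => ?_
  have := pathArc_adj ((mem_dominators.1 hu).2 w hw)
  omega

theorem card_dominators_le_one {a : Fin m} (h : 2 ≤ #(colorClass c a)) :
    #(dominators (pathArc n o) c a) ≤ 1 := by
  obtain ⟨x, hx, y, hy, hxy⟩ := one_lt_card.1 h
  rw [mem_colorClass] at hx hy
  have hxy : (x : ℕ) ≠ y := Fin.val_ne_of_ne hxy
  -- two distinct vertices of a path have at most one common neighbor
  refine card_le_one.2 fun u hu v hv => Fin.val_injective ?_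
  rw [mem_dominators] at hu hv
  have := pathArc_adj (hu.2 x hx); have := pathArc_adj (hu.2 y hy)
  have := pathArc_adj (hv.2 x hx); have := pathArc_adj (hv.2 y hy)
  omega

theorem card_colorClass_add_card_dominators_le_three {a : Fin m}
    (h : (dominators (pathArc n o) c a).Nonempty) :
    #(colorClass c a) + #(dominators (pathArc n o) c a) ≤ 3 := by
  obtain ⟨v, hv⟩ := h
  have := card_colorClass_le_two (mem_dominators.1 hv)
  have := card_dominators_le_two (o := o) (c := c) a
  by_cases h2 : 2 ≤ #(colorClass c a)
  · have := card_dominators_le_one (o := o) h2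
    omega
  · omega

theorem sum_card_dominators_le :
    ∑ a, #(dominators (pathArc n o) c a) ≤ 2 * #{a | (dominators (pathArc n o) c a).Nonempty} :=
  calc ∑ a, #(dominators (pathArc n o) c a)
      ≤ ∑ a, if (dominators (pathArc n o) c a).Nonempty then 2 else 0 := sum_le_sum fun a _ => by
        split_ifs with h
        · exact card_dominators_le_two a
        · simp [not_nonempty_iff_eq_empty.1 h]
    _ = _ := by rw [← sum_filter, sum_const, smul_eq_mul, mul_comm]

theorem sum_card_colorClass_add_card_dominators_le :
    ∑ a, (#(colorClass c a) + #(dominators (pathArc n o) c a)) ≤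
      3 * #{a | (dominators (pathArc n o) c a).Nonempty} +
        ∑ a with ¬ (dominators (pathArc n o) c a).Nonempty, #(colorClass c a) :=
  calc _ ≤ ∑ a, if (dominators (pathArc n o) c a).Nonempty then 3 else #(colorClass c a) :=
        sum_le_sum fun a _ => by
          split_ifs with h
          · exact card_colorClass_add_card_dominators_le_three h
          · simp [not_nonempty_iff_eq_empty.1 h]
    _ = _ := by rw [sum_ite, sum_const, smul_eq_mul, mul_comm]

theorem IsDominatorColoring.dominators_nonempty_of_lt_two_mul_card
    (hc : IsDominatorColoring (pathArc n o) c) (hn : Odd n) (h1 : 1 < n) {b : Fin m}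
    (hb : n < 2 * #(colorClass c b)) (hsinks : n < 2 * #(sinks (pathArc n o))) :
    (dominators (pathArc n o) c b).Nonempty := by
  have hsinks_even := mem_iff_even_of_forall_succ_ne hn sinks_pathArc_succ_ne hsinks
  have hb_even := mem_iff_even_of_forall_succ_ne hn (hc.colorClass_pathArc_succ_ne b) hb
  let one : Fin n := ⟨1, h1⟩
  have hone : ∃ w, pathArc n o one w := by
    by_contra! h
    exact Nat.not_even_one ((hsinks_even one).1 (mem_sinks.2 h))
  obtain ⟨w, hw, hdom⟩ := hc.exists_adj_dominates hone
  have hw_even : Even (w : ℕ) := by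
    have := pathArc_adj hw
    rw [Nat.even_iff]
    simp only [one] at this
    omega
  rw [← mem_colorClass.1 ((hb_even w).2 hw_even)]
  exact ⟨one, mem_dominators.2 hdom⟩

end Coloring

end Path

theorem IsDominatorColoring.exists_undominated_of_le {k m : ℕ} {o : ℕ → Bool}
    {c : Fin (4 * k + 3) → Fin m} (hc : IsDominatorColoring (pathArc (4 * k + 3) o) c)
    (hk : 1 ≤ k) (hm : m ≤ k + 2) :
    ∃ b, dominators (pathArc (4 * k + 3) o) c b = ∅ ∧ 4 * k + 3 < 2 * #(colorClass c b) ∧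
      4 * k + 3 < 2 * #(sinks (pathArc (4 * k + 3) o)) := by
  set A := pathArc (4 * k + 3) o
  set D : Finset (Fin m) := {a | (dominators A c a).Nonempty}
  set U : Finset (Fin m) := {a | ¬ (dominators A c a).Nonempty}
  have hDU : #D + #U = m := by
    rw [card_filter_add_card_filter_not, card_univ, Fintype.card_fin]
  have hsinks : 2 * #(sinks A) ≤ 4 * k + 3 + 1 :=
    two_mul_card_le_of_forall_succ_ne sinks_pathArc_succ_ne
  have hnonsinks : #(sinks A) + #(sinks A)ᶜ = 4 * k + 3 := by
    rw [card_add_card_compl, Fintype.card_fin]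
  have hcover := card_compl_sinks_le_sum_card_dominators hc
  have hdom : ∑ a, #(dominators A c a) ≤ 2 * #D := sum_card_dominators_le
  have hcount : ∑ a, (#(colorClass c a) + #(dominators A c a)) ≤
      3 * #D + ∑ a ∈ U, #(colorClass c a) :=
    sum_card_colorClass_add_card_dominators_le
  rw [sum_add_distrib, ← card_eq_sum_card_colorClass, Fintype.card_fin] at hcount
  have hU_ne : U.Nonempty := by
    by_contra h
    rw [not_nonempty_iff_eq_empty.1 h, sum_empty] at hcount
    omega
  have hU_one : #U = 1 := by
    have := hU_ne.card_pos
    omega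
  obtain ⟨b, hUb⟩ := card_eq_one.1 hU_one
  have hb : b ∈ U := hUb ▸ mem_singleton_self b
  rw [hUb, sum_singleton] at hcount
  have hclass := two_mul_card_le_of_forall_succ_ne (hc.colorClass_pathArc_succ_ne b)
  exact ⟨b, not_nonempty_iff_eq_empty.1 (mem_filter.1 hb).2, by omega, by omega⟩

theorem not_isDominatorColoring_pathArc_of_le {k m : ℕ} (hk : 1 ≤ k) (hm : m ≤ k + 2)
    (o : ℕ → Bool) (c : Fin (4 * k + 3) → Fin m) :
    ¬ IsDominatorColoring (pathArc (4 * k + 3) o) c := fun hc => by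
  obtain ⟨b, hb, hclass, hsinks⟩ := hc.exists_undominated_of_le hk hm
  have := hc.dominators_nonempty_of_lt_two_mul_card ⟨2 * k + 1, by ring⟩ (by omega) hclass hsinks
  simp [hb] at this

theorem le_domChrom_pathArc {k : ℕ} (hk : 1 ≤ k) (o : ℕ → Bool) :
    k + 3 ≤ domChrom (pathArc (4 * k + 3) o) :=
  le_domChrom (IsDominatorColoring.of_injective pathArc_irrefl Function.injective_id)
    fun _ c hc => by
      by_contra! hm
      exact not_isDominatorColoring_pathArc_of_le hk (by omega) o c hc

def evenToOdd (j : ℕ) : Bool := decide (j % 2 = 0)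

theorem pathArc_evenToOdd_iff {n : ℕ} {u v : Fin n} :
    pathArc n evenToOdd u v ↔ (u : ℕ) % 2 = 0 ∧ ((u : ℕ) + 1 = v ∨ (v : ℕ) + 1 = u) := by
  simp only [pathArc, evenToOdd, decide_eq_true_eq, decide_eq_false_iff_not]
  omega

def quarterColoring (k : ℕ) (v : Fin (4 * k + 3)) : Fin (k + 3) :=
  ⟨if (v : ℕ) % 4 = 1 then v / 4 else if (v : ℕ) % 2 = 1 then k + 1 else k + 2, by
    have := v.isLt
    split_ifs <;> omega⟩

theorem val_quarterColoring (k : ℕ) (v : Fin (4 * k + 3)) : (quarterColoring k v : ℕ) =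
    if (v : ℕ) % 4 = 1 then (v : ℕ) / 4 else if (v : ℕ) % 2 = 1 then k + 1 else k + 2 :=
  rfl

theorem isDominatorColoring_quarterColoring (k : ℕ) :
    IsDominatorColoring (pathArc (4 * k + 3) evenToOdd) (quarterColoring k) := by
  refine .of_forall_exists_singleton_class (fun u v huv hc => ?_) fun v ⟨w, hvw⟩ => ?_
  · rw [pathArc_evenToOdd_iff] at huv
    have := congrArg Fin.val hc
    rw [val_quarterColoring, val_quarterColoring] at this
    split_ifs at this <;> omega
  · rw [pathArc_evenToOdd_iff] at hvw
    have := v.isLt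
    have := w.isLt
    let w' : Fin (4 * k + 3) := ⟨if (v : ℕ) % 4 = 0 then v + 1 else v - 1, by split_ifs <;> omega⟩
    refine ⟨w', ?_, fun x hx => Fin.ext ?_⟩
    · rw [pathArc_evenToOdd_iff]
      simp only [w']
      split_ifs <;> omega
    · have hx := congrArg Fin.val hx
      have := x.isLt
      rw [val_quarterColoring, val_quarterColoring] at hx
      simp only [w'] at hx ⊢
      split_ifs at hx ⊢ <;> omega

theorem min_domChrom_orientations_of_path_four_k_add_three (k : ℕ) (hk : 1 ≤ k) :
    minDomChromPath (4 * k + 3) = k + 3 := by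
  have hupper : domChrom (pathArc (4 * k + 3) evenToOdd) = k + 3 :=
    le_antisymm (domChrom_le (isDominatorColoring_quarterColoring k)) (le_domChrom_pathArc hk _)
  exact le_antisymm (Nat.sInf_le ⟨_, hupper.symm⟩)
    (le_csInf ⟨_, _, hupper.symm⟩ fun _ ⟨o, ho⟩ => ho ▸ le_domChrom_pathArc hk o)
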